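/- The exponential generating function of the sequence u_k = ∑_{j=0}^{k} j! · ∑_r C(r,j) S(k,r) is ∑_{k≥0} u_k x^k/k! = exp(e^x - 1)/(2 - e^x). -/

import Mathlib

open Finset Nat PowerSeries

def stirling : ℕ → ℕ → ℕ
  | 0, 0 => 1
  | 0, _ + 1 => 0
  | _ + 1, 0 => 0
  | n + 1, j + 1 => (j + 1) * stirling n (j + 1) + stirling n j

def u (k : ℕ) : ℕ :=
  ∑ j ∈ Finset.range (k + 1),
    j ! * ∑ r ∈ Finset.range (k + 1), r.choose j * stirling k r

/-- Composition `f ∘ g` of formal power series, valid when `g` has zero constant term. -/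
noncomputable def comp (f g : PowerSeries ℚ) : PowerSeries ℚ :=
  PowerSeries.mk fun n =>
    ∑ r ∈ Finset.range (n + 1), (PowerSeries.coeff r f) * (PowerSeries.coeff n (g ^ r))

lemma stirling_zero_right : ∀ n, stirling n 0 = if n = 0 then 1 else 0
  | 0 => rfl
  | _ + 1 => rfl

lemma stirling_eq_zero : ∀ {n r}, n < r → stirling n r = 0
  | 0, _ + 1, _ => rfl
  | n + 1, r + 1, h => by
    have h' : n < r + 1 := by omega
    have h'' : n < r := by omega
    simp [stirling, stirling_eq_zero h', stirling_eq_zero h'']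

lemma stirling_succ (n j : ℕ) :
    stirling (n + 1) (j + 1) = (j + 1) * stirling n (j + 1) + stirling n j := rfl

/-- I1 -/
lemma I1 : ∀ n r, ∑ i ∈ range (n + 1), n.choose i * stirling i r = stirling (n + 1) (r + 1)
  | 0, 0 => by simp [stirling]
  | 0, r + 1 => by simp [stirling]
  | n + 1, r => by
    have key : ∑ i ∈ range (n + 2), (n + 1).choose i * stirling i r
        = ∑ i ∈ range (n + 1), n.choose i * stirling i r
          + ∑ j ∈ range (n + 1), n.choose j * stirling (j + 1) r := by
      rw [Finset.sum_range_succ' (fun i => (n + 1).choose i * stirling i r)]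
      simp_rw [Nat.choose_succ_succ' n, add_mul, Finset.sum_add_distrib]
      rw [Finset.sum_range_succ (fun i => n.choose (i+1) * stirling (i+1) r)]
      rw [Finset.sum_range_succ' (fun i => n.choose i * stirling i r)]
      simp [Nat.choose_succ_self]
      ring
    rw [key]
    cases r with
    | zero =>
      have h0 : ∀ j : ℕ, stirling (j + 1) 0 = 0 := fun j => rfl
      have e1 : ∑ j ∈ range (n + 1), n.choose j * stirling (j + 1) 0 = 0 := by
        simp [h0]
      rw [e1, add_zero, I1 n 0, stirling_succ (n + 1) 0, h0 n]
      ring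
    | succ s =>
      have h2 : ∀ j ∈ range (n + 1), n.choose j * stirling (j + 1) (s + 1)
          = (s + 1) * (n.choose j * stirling j (s + 1)) + n.choose j * stirling j s := by
        intro j _
        rw [stirling_succ j s]
        ring
      rw [Finset.sum_congr rfl h2, Finset.sum_add_distrib, ← Finset.mul_sum,
        I1 n (s + 1), I1 n s, stirling_succ (n + 1) (s + 1), stirling_succ n s]
      ring

/-- I2 -/
lemma I2 (n r : ℕ) : ∑ i ∈ range n, n.choose i * stirling i r = (r + 1) * stirling n (r + 1) := by
  have h1 := I1 n r
  rw [Finset.sum_range_succ, Nat.choose_self, one_mul, stirling_succ] at h1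
  omega

lemma coeff_exp_sub_one (q : ℕ) :
    coeff q (exp ℚ - 1) = if q = 0 then 0 else 1 / (q ! : ℚ) := by
  rw [map_sub, PowerSeries.coeff_exp, PowerSeries.coeff_one]
  split <;> simp_all

lemma L4 : ∀ r n, coeff (R := ℚ) n ((exp ℚ - 1) ^ r) = r ! * stirling n r / n !
  | 0, n => by
    rw [pow_zero, PowerSeries.coeff_one, stirling_zero_right]
    split <;> simp_all
  | r + 1, n => by
    rw [pow_succ, PowerSeries.coeff_mul, Finset.Nat.sum_antidiagonal_eq_sum_range_succ_mk,
      Finset.sum_range_succ]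
    simp only [coeff_exp_sub_one, Nat.sub_self, if_pos rfl, mul_zero, add_zero]
    have key : ∀ i ∈ range n, coeff i ((exp ℚ - 1) ^ r) * (if n - i = 0 then (0:ℚ) else 1 / ((n - i)! : ℚ))
        = (r ! / n !) * ((n.choose i * stirling i r : ℕ) : ℚ) := by
      intro i hi
      rw [Finset.mem_range] at hi
      rw [if_neg (by omega), L4 r i]
      have hc := Nat.cast_choose ℚ hi.le
      have h1 : (i ! : ℚ) ≠ 0 := Nat.cast_ne_zero.2 (Nat.factorial_ne_zero i)
      have h2 : ((n - i)! : ℚ) ≠ 0 := Nat.cast_ne_zero.2 (Nat.factorial_ne_zero _)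
      have h3 : (n ! : ℚ) ≠ 0 := Nat.cast_ne_zero.2 (Nat.factorial_ne_zero n)
      push_cast
      rw [hc]
      field_simp
    rw [Finset.sum_congr rfl key, ← Finset.mul_sum, ← Nat.cast_sum, I2 n r]
    push_cast [Nat.factorial_succ]
    ring


def a (r : ℕ) : ℕ := ∑ j ∈ range (r + 1), r.descFactorial j

lemma a_zero : a 0 = 1 := rfl

lemma a_succ (r : ℕ) : a (r + 1) = (r + 1) * a r + 1 := by
  rw [a, Finset.sum_range_succ']
  simp_rw [Nat.succ_descFactorial_succ]
  rw [← Finset.mul_sum, Nat.descFactorial_zero, ← a]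

lemma u_eq (n : ℕ) : u n = ∑ r ∈ range (n + 1), a r * stirling n r := by
  rw [u]
  simp_rw [Finset.mul_sum]
  rw [Finset.sum_comm]
  refine Finset.sum_congr rfl fun r hr => ?_
  have key : ∀ j ∈ range (n + 1), j ! * (r.choose j * stirling n r)
      = r.descFactorial j * stirling n r := by
    intro j _
    rw [Nat.descFactorial_eq_factorial_mul_choose]
    ring
  rw [Finset.sum_congr rfl key, ← Finset.sum_mul]
  congr 1
  rw [a]
  refine (Finset.sum_subset ?_ ?_).symm
  · intro j hj
    rw [Finset.mem_range] at hj ⊢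
    rw [Finset.mem_range] at hr
    omega
  · intro j _ hj
    rw [Finset.mem_range, not_lt] at hj
    exact Nat.descFactorial_eq_zero_iff_lt.2 (by omega)

lemma main (n : ℕ) :
    ∑ i ∈ range (n + 1), n.choose i * u i + ∑ r ∈ range (n + 1), stirling n r = 2 * u n := by
  have hu : ∀ i ∈ range (n + 1), u i = ∑ r ∈ range (n + 1), a r * stirling i r := by
    intro i hi
    rw [Finset.mem_range] at hi
    rw [u_eq]
    refine Finset.sum_subset (fun r hr => by rw [Finset.mem_range] at *; omega) ?_
    intro r _ hr
    rw [Finset.mem_range, not_lt] at hr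
    rw [stirling_eq_zero (by omega : i < r), mul_zero]
  have s1 : ∑ i ∈ range (n + 1), n.choose i * u i
      = ∑ r ∈ range (n + 1), a r * stirling (n + 1) (r + 1) := by
    rw [Finset.sum_congr rfl (fun i hi => by rw [hu i hi, Finset.mul_sum])]
    rw [Finset.sum_comm]
    refine Finset.sum_congr rfl fun r _ => ?_
    rw [← I1 n r, Finset.mul_sum]
    exact Finset.sum_congr rfl fun i _ => by ring
  have s2 : ∑ r ∈ range (n + 1), a r * stirling (n + 1) (r + 1)
      = (∑ r ∈ range (n + 1), (r + 1) * a r * stirling n (r + 1)) + u n := by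
    rw [u_eq, ← Finset.sum_add_distrib]
    refine Finset.sum_congr rfl fun r _ => ?_
    rw [stirling_succ]
    ring
  have s3 : (∑ r ∈ range (n + 1), (r + 1) * a r * stirling n (r + 1))
      + ∑ r ∈ range (n + 1), stirling n r = u n := by
    rw [u_eq, Finset.sum_range_succ' (fun r => a r * stirling n r),
        Finset.sum_range_succ' (fun r => stirling n r),
        Finset.sum_range_succ (fun r => (r + 1) * a r * stirling n (r + 1)),
        stirling_eq_zero (Nat.lt_succ_self n), mul_zero, add_zero, a_zero, one_mul]
    have comb : ∑ r ∈ range n, ((r + 1) * a r * stirling n (r + 1) + stirling n (r + 1))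
        = ∑ r ∈ range n, a (r + 1) * stirling n (r + 1) :=
      Finset.sum_congr rfl fun r _ => by rw [a_succ]; ring
    rw [Finset.sum_add_distrib] at comb
    omega
  omega

lemma coeff_two_sub_exp (q : ℕ) :
    coeff q (2 - exp ℚ) = (if q = 0 then 2 else 0) - 1 / (q ! : ℚ) := by
  rw [map_sub, PowerSeries.coeff_exp]
  have h2 : (2 : ℚ⟦X⟧) = PowerSeries.C 2 := by
    rw [map_ofNat]
  rw [h2, PowerSeries.coeff_C]
  split <;> simp_all


/-- `∑ u_k x^k/k! = exp(e^x - 1)/(2 - e^x)` as formal power series over `ℚ`. -/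
theorem stmt6 :
    PowerSeries.mk (fun k => (u k : ℚ) / k !) =
    comp (PowerSeries.exp ℚ) (PowerSeries.exp ℚ - 1) * (2 - PowerSeries.exp ℚ)⁻¹ := by
  have hconst : constantCoeff (R := ℚ) (2 - exp ℚ) ≠ 0 := by
    rw [map_sub, PowerSeries.constantCoeff_exp]
    have h2 : (2 : ℚ⟦X⟧) = PowerSeries.C 2 := by rw [map_ofNat]
    rw [h2, PowerSeries.constantCoeff_C]
    norm_num
  rw [PowerSeries.eq_mul_inv_iff_mul_eq hconst]
  ext n
  rw [PowerSeries.coeff_mul, Finset.Nat.sum_antidiagonal_eq_sum_range_succ_mk,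
      Finset.sum_range_succ, comp, PowerSeries.coeff_mk]
  simp only [PowerSeries.coeff_mk, coeff_two_sub_exp, PowerSeries.coeff_exp, L4,
    Nat.sub_self]
  have hn : (n ! : ℚ) ≠ 0 := Nat.cast_ne_zero.2 (Nat.factorial_ne_zero n)
  have hL : ∀ i ∈ range n, (u i : ℚ) / i ! * ((if n - i = 0 then (2:ℚ) else 0) - 1 / ((n - i)! : ℚ))
      = -(((n.choose i * u i : ℕ) : ℚ)) / n ! := by
    intro i hi
    rw [Finset.mem_range] at hi
    rw [if_neg (by omega)]
    have h1 : (i ! : ℚ) ≠ 0 := Nat.cast_ne_zero.2 (Nat.factorial_ne_zero i)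
    have h2 : ((n - i)! : ℚ) ≠ 0 := Nat.cast_ne_zero.2 (Nat.factorial_ne_zero _)
    push_cast
    rw [Nat.cast_choose ℚ hi.le]
    field_simp
    ring
  have hR : ∀ r ∈ range (n + 1),
      (algebraMap ℚ ℚ) (1 / (r ! : ℚ)) * ((r ! : ℚ) * stirling n r / n !)
      = ((stirling n r : ℕ) : ℚ) / n ! := by
    intro r _
    have h1 : (r ! : ℚ) ≠ 0 := Nat.cast_ne_zero.2 (Nat.factorial_ne_zero r)
    simp only [Algebra.algebraMap_self_apply]
    field_simp
  rw [Finset.sum_congr rfl hL, Finset.sum_congr rfl hR]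
  have hnat : ∑ i ∈ range n, n.choose i * u i + ∑ r ∈ range (n + 1), stirling n r = u n := by
    have h := main n
    rw [Finset.sum_range_succ, Nat.choose_self, one_mul] at h
    omega
  have hcast : ((∑ i ∈ range n, n.choose i * u i : ℕ) : ℚ)
      + ((∑ r ∈ range (n + 1), stirling n r : ℕ) : ℚ) = (u n : ℚ) := by
    exact_mod_cast hnat
  rw [← Finset.sum_div, ← Finset.sum_div, Finset.sum_neg_distrib, ← Nat.cast_sum, ← Nat.cast_sum]
  simp only [if_true, Nat.factorial_zero, Nat.cast_one]
  norm_num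
  rw [← add_div]
  have hfin : -((∑ i ∈ range n, n.choose i * u i : ℕ) : ℚ)
      + ((u n : ℕ) : ℚ) = ((∑ r ∈ range (n + 1), stirling n r : ℕ) : ℚ) := by
    linarith [hcast]
  congr 1
  push_cast at hfin ⊢
  linarith
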